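/- arXiv:2209.03491 — 4 statements merged into one kernel-verified Lean document; each statement's English description precedes it below -/
import Mathlib

section
/- Let X, U be finite sets, P : X × U × P(X) × P(U) → P(X) a transition kernel satisfying the Lipschitz bound |P(x,u,μ₁,ν₁) − P(x,u,μ₂,ν₂)|₁ ≤ L_P (|μ₁−μ₂|₁ + |ν₁−ν₂|₁) for all x, u, μᵢ, νᵢ. Define ν^MF(μ,π)(u) = Σ_x π(x,μ)(u) μ(x) and P^MF(μ,π)(y) = Σ_x Σ_u P(x,u,μ,ν^MF(μ,π))(y) π(x,μ)(u) μ(x). Then for any μ, μ̄ ∈ P(X) and policies π, π̄: |P^MF(μ,π) − P^MF(μ̄,π̄)|₁ ≤ (1 + 2L_P)|μ − μ̄|₁ + (1 + L_P) sup_{x∈X} |π(x,μ) − π̄(x,μ̄)|₁. -/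
/-!
`P^MF(μ, π)` mixes the kernels `P(x, u, μ, ν^MF)` against the state-action distribution
`J(x, u) = π(x, μ)(u) μ(x)`, and `ν^MF` is the `U`-marginal of `J`. Mixing probability kernels
against weights `w` changes by at most `∑ w · (kernel distance) + |w - w̄|₁`, and
`|J - J̄|₁ ≤ |μ - μ̄|₁ + sup_x |π(x, μ) - π̄(x, μ̄)|₁`; taking marginals only decreases `ℓ¹`
distances, so the same bound holds for `ν^MF`. The Lipschitz bound on `P` then gives
`L_P (2 |μ - μ̄|₁ + sup) + |μ - μ̄|₁ + sup`.
-/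

open Finset

def IsPmf {X : Type*} [Fintype X] (μ : X → ℝ) : Prop :=
  (∀ x, 0 ≤ μ x) ∧ ∑ x, μ x = 1

noncomputable def l1 {X : Type*} [Fintype X] (f : X → ℝ) : ℝ := ∑ x, |f x|

/-- The mean-field action distribution `ν^MF(μ, π)`. -/
noncomputable def nuMF {X U : Type*} [Fintype X] [Fintype U]
    (μ : X → ℝ) (π : X → (X → ℝ) → U → ℝ) : U → ℝ :=
  fun u => ∑ x, π x μ u * μ x

/-- The one-step mean-field state distribution update `P^MF(μ, π)`. -/
noncomputable def PMF' {X U : Type*} [Fintype X] [Fintype U]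
    (P : X → U → (X → ℝ) → (U → ℝ) → X → ℝ)
    (μ : X → ℝ) (π : X → (X → ℝ) → U → ℝ) : X → ℝ :=
  fun y => ∑ x, ∑ u, P x u μ (nuMF μ π) y * π x μ u * μ x

section L1

variable {ι Y : Type*} [Fintype Y]

lemma IsPmf.sum_mul_le {μ f : Y → ℝ} {c : ℝ} (hμ : IsPmf μ) (hf : ∀ y, f y ≤ c) :
    ∑ y, μ y * f y ≤ c :=
  calc ∑ y, μ y * f y ≤ ∑ y, μ y * c :=
        sum_le_sum fun y _ => mul_le_mul_of_nonneg_left (hf y) (hμ.1 y)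
    _ = c := by rw [← sum_mul, hμ.2, one_mul]

lemma IsPmf.marginal {X : Type*} [Fintype X] {f : X × Y → ℝ} (hf : IsPmf f) :
    IsPmf (fun y => ∑ x, f (x, y)) :=
  ⟨fun _ => sum_nonneg fun _ _ => hf.1 _, by rw [sum_comm, ← Fintype.sum_prod_type, hf.2]⟩

lemma l1_sum_le [Fintype ι] (f : ι → Y → ℝ) : l1 (fun y => ∑ i, f i y) ≤ ∑ i, l1 (f i) :=
  calc ∑ y, |∑ i, f i y| ≤ ∑ y, ∑ i, |f i y| := sum_le_sum fun _ _ => abs_sum_le_sum_abs _ _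
    _ = ∑ i, l1 (f i) := sum_comm

lemma l1_marginal_sub_le {X : Type*} [Fintype X] (f g : X × Y → ℝ) :
    l1 (fun y => ∑ x, f (x, y) - ∑ x, g (x, y)) ≤ l1 (fun p => f p - g p) := by
  simp_rw [← sum_sub_distrib]
  refine (l1_sum_le fun x y => f (x, y) - g (x, y)).trans_eq ?_
  rw [l1, Fintype.sum_prod_type]
  rfl

-- Split `k w - k' w' = (k - k') w + k' (w - w')` and use `∑ k' = 1`.
lemma l1_mul_sub_mul_le {k k' : Y → ℝ} {w w' : ℝ} (hw : 0 ≤ w) (hk' : IsPmf k') :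
    l1 (fun y => k y * w - k' y * w') ≤ w * l1 (fun y => k y - k' y) + |w - w'| :=
  calc l1 (fun y => k y * w - k' y * w') ≤ ∑ y, (|k y - k' y| * w + k' y * |w - w'|) := by
        refine sum_le_sum fun y _ => ?_
        change |k y * w - k' y * w'| ≤ _
        rw [show k y * w - k' y * w' = (k y - k' y) * w + k' y * (w - w') by ring]
        refine (abs_add_le _ _).trans_eq ?_
        rw [abs_mul, abs_mul, abs_of_nonneg hw, abs_of_nonneg (hk'.1 y)]
    _ = w * l1 (fun y => k y - k' y) + |w - w'| := by
        rw [sum_add_distrib, ← sum_mul, ← sum_mul, hk'.2, l1]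
        ring

lemma l1_mix_sub_le [Fintype ι] {K K' : ι → Y → ℝ} {w w' : ι → ℝ} (hw : ∀ i, 0 ≤ w i)
    (hK' : ∀ i, IsPmf (K' i)) :
    l1 (fun y => ∑ i, K i y * w i - ∑ i, K' i y * w' i)
      ≤ ∑ i, w i * l1 (fun y => K i y - K' i y) + l1 (fun i => w i - w' i) :=
  calc l1 (fun y => ∑ i, K i y * w i - ∑ i, K' i y * w' i)
        = l1 (fun y => ∑ i, (K i y * w i - K' i y * w' i)) := by simp_rw [sum_sub_distrib]
    _ ≤ ∑ i, l1 (fun y => K i y * w i - K' i y * w' i) := l1_sum_le _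
    _ ≤ ∑ i, (w i * l1 (fun y => K i y - K' i y) + |w i - w' i|) :=
        sum_le_sum fun i _ => l1_mul_sub_mul_le (hw i) (hK' i)
    _ = _ := sum_add_distrib

end L1

section MeanField

variable {X U : Type*} [Fintype X] [Fintype U]

/-- `ν^MF(μ, π)` is the `U`-marginal of this state-action distribution. -/
noncomputable def jointMF (μ : X → ℝ) (π : X → (X → ℝ) → U → ℝ) : X × U → ℝ :=
  fun p => π p.1 μ p.2 * μ p.1

lemma PMF'_eq_sum_jointMF (P : X → U → (X → ℝ) → (U → ℝ) → X → ℝ) (μ : X → ℝ)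
    (π : X → (X → ℝ) → U → ℝ) (y : X) :
    PMF' P μ π y = ∑ p : X × U, P p.1 p.2 μ (nuMF μ π) y * jointMF μ π p := by
  simp only [PMF', jointMF, Fintype.sum_prod_type, mul_assoc]

lemma IsPmf.jointMF {μ : X → ℝ} {π : X → (X → ℝ) → U → ℝ} (hμ : IsPmf μ)
    (hπ : ∀ x, IsPmf (π x μ)) : IsPmf (jointMF μ π) := by
  refine ⟨fun p => mul_nonneg ((hπ p.1).1 p.2) (hμ.1 p.1), ?_⟩
  simp only [_root_.jointMF, Fintype.sum_prod_type, ← sum_mul, (hπ _).2, one_mul, hμ.2]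

lemma l1_jointMF_sub_le {μ μ' : X → ℝ} {π π' : X → (X → ℝ) → U → ℝ} (hμ : IsPmf μ)
    (hπ' : ∀ x, IsPmf (π' x μ')) :
    l1 (fun p => jointMF μ π p - jointMF μ' π' p)
      ≤ l1 (fun x => μ x - μ' x) + ⨆ x, l1 (fun u => π x μ u - π' x μ' u) :=
  calc l1 (fun p => jointMF μ π p - jointMF μ' π' p)
        = ∑ x, l1 (fun u => π x μ u * μ x - π' x μ' u * μ' x) := Fintype.sum_prod_type _
    _ ≤ ∑ x, (μ x * l1 (fun u => π x μ u - π' x μ' u) + |μ x - μ' x|) :=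
        sum_le_sum fun x _ => l1_mul_sub_mul_le (hμ.1 x) (hπ' x)
    _ = ∑ x, μ x * l1 (fun u => π x μ u - π' x μ' u) + l1 (fun x => μ x - μ' x) :=
        sum_add_distrib
    _ ≤ (⨆ x, l1 (fun u => π x μ u - π' x μ' u)) + l1 (fun x => μ x - μ' x) := by
        gcongr
        exact hμ.sum_mul_le
          (le_ciSup (Set.finite_range fun x => l1 (fun u => π x μ u - π' x μ' u)).bddAbove)
    _ = _ := add_comm _ _

end MeanField

/-- Lemma 2: Lipschitz continuity of `P^MF`. -/
theorem PMF_lipschitz {X U : Type*} [Fintype X] [Fintype U]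
    (L_P : ℝ) (hLP : 0 < L_P)
    (P : X → U → (X → ℝ) → (U → ℝ) → X → ℝ)
    (hP : ∀ x u μ ν, IsPmf μ → IsPmf ν → IsPmf (P x u μ ν))
    (hPLip : ∀ x u μ₁ μ₂ ν₁ ν₂, IsPmf μ₁ → IsPmf μ₂ → IsPmf ν₁ → IsPmf ν₂ →
      l1 (fun y => P x u μ₁ ν₁ y - P x u μ₂ ν₂ y)
        ≤ L_P * (l1 (fun x' => μ₁ x' - μ₂ x') + l1 (fun u' => ν₁ u' - ν₂ u')))
    (μ μ' : X → ℝ) (hμ : IsPmf μ) (hμ' : IsPmf μ')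
    (π π' : X → (X → ℝ) → U → ℝ)
    (hπ : ∀ x ν, IsPmf ν → IsPmf (π x ν))
    (hπ' : ∀ x ν, IsPmf ν → IsPmf (π' x ν)) :
    l1 (fun y => PMF' P μ π y - PMF' P μ' π' y)
      ≤ (1 + 2 * L_P) * l1 (fun x => μ x - μ' x)
        + (1 + L_P) * ⨆ x, l1 (fun u => π x μ u - π' x μ' u) := by
  set Δμ := l1 (fun x => μ x - μ' x)
  set Δπ := ⨆ x, l1 (fun u => π x μ u - π' x μ' u)
  have hJ : IsPmf (jointMF μ π) := hμ.jointMF (hπ · μ hμ)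
  have hJ' : IsPmf (jointMF μ' π') := hμ'.jointMF (hπ' · μ' hμ')
  have hΔJ : l1 (fun p => jointMF μ π p - jointMF μ' π' p) ≤ Δμ + Δπ :=
    l1_jointMF_sub_le hμ (hπ' · μ' hμ')
  have hΔν : l1 (fun u => nuMF μ π u - nuMF μ' π' u) ≤ Δμ + Δπ :=
    (l1_marginal_sub_le (jointMF μ π) (jointMF μ' π')).trans hΔJ
  have hPstep : ∀ p : X × U,
      l1 (fun y => P p.1 p.2 μ (nuMF μ π) y - P p.1 p.2 μ' (nuMF μ' π') y)
        ≤ L_P * (Δμ + (Δμ + Δπ)) := fun p =>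
    (hPLip _ _ _ _ _ _ hμ hμ' hJ.marginal hJ'.marginal).trans
      (mul_le_mul_of_nonneg_left (add_le_add_right hΔν _) hLP.le)
  simp only [PMF'_eq_sum_jointMF]
  calc _ ≤ ∑ p, jointMF μ π p
              * l1 (fun y => P p.1 p.2 μ (nuMF μ π) y - P p.1 p.2 μ' (nuMF μ' π') y)
            + l1 (fun p => jointMF μ π p - jointMF μ' π' p) :=
        l1_mix_sub_le hJ.1 fun p => hP _ _ _ _ hμ' hJ'.marginal
    _ ≤ L_P * (Δμ + (Δμ + Δπ)) + (Δμ + Δπ) := add_le_add (hJ.sum_mul_le hPstep) hΔJ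
    _ = (1 + 2 * L_P) * Δμ + (1 + L_P) * Δπ := by ring
end

section
/- Let M, N be positive integers and for each m ∈ {1,…,M}, let {X_{mn}}_{n=1}^N be a family of random variables taking values in [0,1] such that for each fixed m the variables X_{m1},…,X_{mN} are mutually independent, and for every n, Σ_{m=1}^M E[X_{mn}] ≤ 1. Then Σ_{m=1}^M E| Σ_{n=1}^N (X_{mn} − E[X_{mn}]) | ≤ √(MN). -/
open MeasureTheory ProbabilityTheory Finset

/-! For fixed `m`, the L¹ deviation of `∑ₙ Xₘₙ` is at most its standard deviation, and by
independence its variance is `∑ₙ Var Xₘₙ ≤ ∑ₙ 𝔼 Xₘₙ =: aₘ`, since `Var Y ≤ 𝔼 Y` for `Y ∈ [0,1]`.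
Cauchy–Schwarz then gives `∑ₘ √aₘ ≤ √(M ∑ₘ aₘ) ≤ √(MN)`. -/

lemma Real.sum_sqrt_le_sqrt_card_mul_sum {ι : Type*} (s : Finset ι) {f : ι → ℝ}
    (hf : ∀ i, 0 ≤ f i) : ∑ i ∈ s, √(f i) ≤ √(#s * ∑ i ∈ s, f i) := by
  have h := Real.sum_sqrt_mul_sqrt_le s (fun _ => zero_le_one) hf
  simpa [Real.sqrt_mul (Nat.cast_nonneg _)] using h

namespace ProbabilityTheory

variable {Ω : Type*} {mΩ : MeasurableSpace Ω} {μ : Measure Ω} [IsProbabilityMeasure μ]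

lemma integral_abs_le_sqrt_integral_sq {Y : Ω → ℝ} (hY : MemLp Y 2 μ) :
    ∫ ω, |Y ω| ∂μ ≤ √(∫ ω, Y ω ^ 2 ∂μ) := by
  -- `(𝔼|Y|)² ≤ 𝔼|Y|²` because the variance of `|Y|` is nonnegative
  have h := variance_nonneg |Y| μ
  rw [variance_eq_sub hY.abs] at h
  refine (Real.le_sqrt (integral_nonneg fun _ => abs_nonneg _)
    (integral_nonneg fun _ => sq_nonneg _)).2 ?_
  simpa [sq_abs] using h

lemma integral_abs_sub_integral_le_sqrt_variance {Y : Ω → ℝ} (hY : MemLp Y 2 μ) :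
    ∫ ω, |Y ω - μ[Y]| ∂μ ≤ √(Var[Y; μ]) := by
  rw [variance_eq_integral hY.aemeasurable]
  exact integral_abs_le_sqrt_integral_sq (hY.sub (memLp_const _))

lemma variance_le_integral_of_mem_Icc {Y : Ω → ℝ} (hY : AEMeasurable Y μ)
    (hbdd : ∀ᵐ ω ∂μ, Y ω ∈ Set.Icc (0 : ℝ) 1) : Var[Y; μ] ≤ μ[Y] := by
  have hY0 : 0 ≤ μ[Y] := integral_nonneg_of_ae (hbdd.mono fun _ h => h.1)
  calc Var[Y; μ] ≤ (1 - μ[Y]) * (μ[Y] - 0) := variance_le_sub_mul_sub hbdd hY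
    _ ≤ μ[Y] := by nlinarith

lemma integral_abs_sum_sub_integral_le_sqrt_sum_integral {ι : Type*} [Fintype ι]
    {X : ι → Ω → ℝ} (hX : ∀ i, AEMeasurable (X i) μ)
    (hbdd : ∀ i, ∀ᵐ ω ∂μ, X i ω ∈ Set.Icc (0 : ℝ) 1)
    (hind : Pairwise fun i j => X i ⟂ᵢ[μ] X j) :
    ∫ ω, |∑ i, (X i ω - μ[X i])| ∂μ ≤ √(∑ i, μ[X i]) := by
  have hX2 i : MemLp (X i) 2 μ := memLp_of_bounded (hbdd i) (hX i).aestronglyMeasurable 2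
  have hmean : ∫ ω, ∑ i, X i ω ∂μ = ∑ i, μ[X i] :=
    integral_finsetSum univ fun i _ => (hX2 i).integrable one_le_two
  calc ∫ ω, |∑ i, (X i ω - μ[X i])| ∂μ = ∫ ω, |(∑ i, X i) ω - μ[∑ i, X i]| ∂μ := by
        simp only [Finset.sum_apply, hmean, sum_sub_distrib]
    _ ≤ √(Var[∑ i, X i; μ]) :=
        integral_abs_sub_integral_le_sqrt_variance (memLp_finsetSum' _ fun i _ => hX2 i)
    _ = √(∑ i, Var[X i; μ]) := by
        rw [IndepFun.variance_sum (fun i _ => hX2 i) fun i _ j _ hij => hind hij]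
    _ ≤ √(∑ i, μ[X i]) := Real.sqrt_le_sqrt <|
        sum_le_sum fun i _ => variance_le_integral_of_mem_Icc (hX i) (hbdd i)

end ProbabilityTheory

theorem sum_abs_deviation_le_sqrt_general {Ω : Type*} [MeasureSpace Ω]
    [IsProbabilityMeasure (ℙ : Measure Ω)]
    (M N : ℕ)
    (X : Fin M → Fin N → Ω → ℝ)
    (hmeas : ∀ m n, Measurable (X m n))
    (hbdd : ∀ m n ω, X m n ω ∈ Set.Icc (0 : ℝ) 1)
    (hind : ∀ m, iIndepFun (X m) ℙ)
    (hsum : ∀ n, ∑ m, (∫ ω, X m n ω) ≤ 1) :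
    ∑ m, (∫ ω, |∑ n, (X m n ω - ∫ ω', X m n ω')|)
      ≤ Real.sqrt (M * N) := by
  have hmean_nonneg m : 0 ≤ ∑ n, ∫ ω, X m n ω :=
    sum_nonneg fun n _ => integral_nonneg fun ω => (hbdd m n ω).1
  have htotal : ∑ m, ∑ n, ∫ ω, X m n ω ≤ N := by
    rw [sum_comm]
    simpa using sum_le_sum fun n (_ : n ∈ univ) => hsum n
  calc ∑ m, (∫ ω, |∑ n, (X m n ω - ∫ ω', X m n ω')|) ≤ ∑ m, √(∑ n, ∫ ω, X m n ω) :=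
        sum_le_sum fun m _ => integral_abs_sum_sub_integral_le_sqrt_sum_integral
          (fun n => (hmeas m n).aemeasurable) (fun n => ae_of_all _ (hbdd m n))
          fun _ _ hij => (hind m).indepFun hij
    _ ≤ √(M * ∑ m, ∑ n, ∫ ω, X m n ω) := by
        simpa using Real.sum_sqrt_le_sqrt_card_mul_sum univ hmean_nonneg
    _ ≤ √(M * N) := Real.sqrt_le_sqrt (mul_le_mul_of_nonneg_left htotal (Nat.cast_nonneg _))

/-- Lemma 7: an L1 concentration bound for families of independent `[0,1]`-valued
random variables whose expectations sum (over `m`) to at most one. -/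
theorem sum_abs_deviation_le_sqrt {Ω : Type*} [MeasureSpace Ω]
    [IsProbabilityMeasure (ℙ : Measure Ω)]
    (M N : ℕ) (hM : 0 < M) (hN : 0 < N)
    (X : Fin M → Fin N → Ω → ℝ)
    (hmeas : ∀ m n, Measurable (X m n))
    (hbdd : ∀ m n ω, X m n ω ∈ Set.Icc (0 : ℝ) 1)
    (hind : ∀ m, iIndepFun (X m) ℙ)
    (hsum : ∀ n, ∑ m, (∫ ω, X m n ω) ≤ 1) :
    ∑ m, (∫ ω, |∑ n, (X m n ω - ∫ ω', X m n ω')|)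
      ≤ Real.sqrt (M * N) :=
  sum_abs_deviation_le_sqrt_general M N X hmeas hbdd hind hsum
end

section
/- Consider an N-agent system on finite state space X and finite action space U where, conditioned on the joint state x_t^N = (x_t^1,…,x_t^N), agents choose actions independently with u_t^i ∼ π_t(x_t^i, μ_t^N), where μ_t^N is the empirical state distribution μ_t^N(x) = (1/N) Σ_i δ(x_t^i = x). Let ν_t^N(u) = (1/N) Σ_i δ(u_t^i = u) be the empirical action distribution and ν^MF(μ,π)(u) = Σ_x π(x,μ)(u) μ(x). Then E|ν_t^N − ν^MF(μ_t^N, π_t)|₁ ≤ √(|U|)/√N. -/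
/-!
Given the states, the actions are independent with laws `p i = π (x i) (emp x)`, and
`nuMF (emp x) π u = (∑ i, p i u) / N` is the mean of `emp a u`. So `N (emp a u - nuMF … u)` is a
sum of independent centred indicators, whose second moment is the sum of the Bernoulli variances
`p i u (1 - p i u) ≤ p i u`; summing over `u` bounds the total second moment by `1 / N`.
Cauchy–Schwarz, once in the expectation and once over `U`, turns this into `√|U| · √(1 / N)`.
-/

open Finset

/-- Empirical distribution of a configuration of `N` agents. -/
noncomputable def emp {X : Type*} [Fintype X] [DecidableEq X] {N : ℕ}
    (s : Fin N → X) : X → ℝ :=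
  fun x => (∑ i, if s i = x then (1 : ℝ) else 0) / N

section ProductWeights

variable {ι U : Type*} [Fintype ι] [DecidableEq ι] [Fintype U] {p : ι → U → ℝ}

lemma sum_prod_apply_eq_one (hp : ∀ i, ∑ u, p i u = 1) : ∑ a : ι → U, ∏ i, p i (a i) = 1 := by
  rw [← Fintype.prod_sum]
  simp [hp]

lemma sum_prod_mul_prod_mem (hp : ∀ i, ∑ u, p i u = 1) (s : Finset ι) (f : ι → U → ℝ) :
    ∑ a : ι → U, (∏ i, p i (a i)) * ∏ i ∈ s, f i (a i) = ∏ i ∈ s, ∑ u, p i u * f i u := by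
  have hmarg : ∀ i, ∑ u, p i u * (if i ∈ s then f i u else 1)
      = if i ∈ s then ∑ u, p i u * f i u else 1 := by
    intro i
    split_ifs <;> simp [hp]
  simp_rw [← prod_ite_mem_eq s, ← prod_mul_distrib,
    ← Fintype.prod_sum fun i u => p i u * if i ∈ s then f i u else 1, hmarg]

lemma sum_prod_mul_apply (hp : ∀ i, ∑ u, p i u = 1) (i : ι) (g : U → ℝ) :
    ∑ a : ι → U, (∏ j, p j (a j)) * g (a i) = ∑ u, p i u * g u := by
  simpa using sum_prod_mul_prod_mem hp {i} fun _ => g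

lemma sum_prod_mul_apply_mul_apply (hp : ∀ i, ∑ u, p i u = 1) {i k : ι} (hik : i ≠ k)
    (g h : U → ℝ) :
    ∑ a : ι → U, (∏ j, p j (a j)) * (g (a i) * h (a k))
      = (∑ u, p i u * g u) * ∑ u, p k u * h u := by
  simpa [Finset.prod_pair hik, hik.symm] using
    sum_prod_mul_prod_mem hp {i, k} fun j => if j = i then g else h

lemma sum_prod_mul_sum_sq (hp : ∀ i, ∑ u, p i u = 1) (g : ι → U → ℝ)
    (hg : ∀ i, ∑ u, p i u * g i u = 0) :
    ∑ a : ι → U, (∏ j, p j (a j)) * (∑ i, g i (a i)) ^ 2 = ∑ i, ∑ u, p i u * g i u ^ 2 := by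
  have hcov : ∀ i k, ∑ a : ι → U, (∏ j, p j (a j)) * (g i (a i) * g k (a k))
      = if i = k then ∑ u, p i u * g i u ^ 2 else 0 := by
    intro i k
    split_ifs with hik
    · subst hik
      simpa only [← sq] using sum_prod_mul_apply hp i fun u => g i u ^ 2
    · rw [sum_prod_mul_apply_mul_apply hp hik, hg, zero_mul]
  simp_rw [sq (∑ i, _), sum_mul_sum, mul_sum]
  rw [sum_comm]
  refine sum_congr rfl fun i _ => ?_
  rw [sum_comm]
  simp [hcov]

end ProductWeights

lemma sum_mul_abs_le_sqrt_sum_mul_sq {α : Type*} [Fintype α] {w : α → ℝ} (hw : ∀ a, 0 ≤ w a)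
    (hw1 : ∑ a, w a = 1) (f : α → ℝ) : ∑ a, w a * |f a| ≤ √(∑ a, w a * f a ^ 2) := by
  have hsqrt : ∀ a, √(w a) * √(w a * f a ^ 2) = w a * |f a| := fun a => by
    rw [Real.sqrt_mul (hw a), Real.sqrt_sq_eq_abs, ← mul_assoc, Real.mul_self_sqrt (hw a)]
  simpa [hsqrt, hw1] using
    Real.sum_sqrt_mul_sqrt_le univ hw fun a => mul_nonneg (hw a) (sq_nonneg (f a))

section Empirical

variable {X U : Type*} [Fintype X] [DecidableEq X] [Fintype U] [DecidableEq U] {N : ℕ}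

lemma sum_mul_emp (f : X → ℝ) (x : Fin N → X) : ∑ y, f y * emp x y = (∑ i, f (x i)) / N := by
  simp only [emp, mul_div_assoc', ← sum_div, mul_sum, mul_ite, mul_one, mul_zero]
  rw [sum_comm]
  simp

lemma isPmf_emp (hN : 0 < N) (x : Fin N → X) : IsPmf (emp x) := by
  refine ⟨fun y => div_nonneg (sum_nonneg fun i _ => by positivity) N.cast_nonneg, ?_⟩
  simpa [hN.ne'] using sum_mul_emp (fun _ => (1 : ℝ)) x

lemma emp_sub_div_eq (a : Fin N → U) (q : Fin N → U → ℝ) (u : U) :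
    emp a u - (∑ i, q i u) / N = (∑ i, ((if a i = u then 1 else 0) - q i u)) / N := by
  rw [emp, sum_sub_distrib, sub_div]

lemma sum_mul_ite_sub (q : U → ℝ) (hq : ∑ v, q v = 1) (u : U) :
    ∑ v, q v * ((if v = u then 1 else 0) - q u) = 0 := by
  simp [mul_sub, ← sum_mul, hq]

lemma sum_mul_ite_sub_sq (q : U → ℝ) (hq : ∑ v, q v = 1) (u : U) :
    ∑ v, q v * ((if v = u then 1 else 0) - q u) ^ 2 = q u * (1 - q u) := by
  have hmean : ∑ v, q v * (if v = u then 1 else 0) = q u := by simp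
  calc ∑ v, q v * ((if v = u then 1 else 0) - q u) ^ 2
      = (∑ v, q v * (if v = u then 1 else 0)) * (1 - 2 * q u) + q u ^ 2 * ∑ v, q v := by
        rw [sum_mul, mul_sum, ← sum_add_distrib]
        exact sum_congr rfl fun v _ => by split_ifs <;> ring
    _ = q u * (1 - q u) := by rw [hmean, hq]; ring

lemma sum_prod_mul_emp_sub_sq {p : Fin N → U → ℝ} (hp : ∀ i, ∑ u, p i u = 1) (u : U) :
    ∑ a : Fin N → U, (∏ i, p i (a i)) * (emp a u - (∑ i, p i u) / N) ^ 2
      = (∑ i, p i u * (1 - p i u)) / N ^ 2 := by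
  simp_rw [emp_sub_div_eq, div_pow, mul_div_assoc', ← sum_div]
  rw [sum_prod_mul_sum_sq hp _ fun i => sum_mul_ite_sub (p i) (hp i) u]
  simp_rw [sum_mul_ite_sub_sq _ (hp _)]

lemma sum_sum_prod_mul_emp_sub_sq_le {p : Fin N → U → ℝ} (hp : ∀ i, IsPmf (p i)) :
    ∑ u, ∑ a : Fin N → U, (∏ i, p i (a i)) * (emp a u - (∑ i, p i u) / N) ^ 2 ≤ 1 / N := by
  simp_rw [sum_prod_mul_emp_sub_sq fun i => (hp i).2]
  calc ∑ u, (∑ i, p i u * (1 - p i u)) / N ^ 2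
      ≤ ∑ u, (∑ i, p i u) / N ^ 2 := by
        gcongr with u _ i _
        exact mul_le_of_le_one_right ((hp i).1 u) (sub_le_self _ ((hp i).1 u))
    _ = 1 / N := by
        rw [← sum_div, sum_comm]
        simp [fun i => (hp i).2, sq, div_self_mul_self']

theorem sum_prod_mul_l1_emp_sub_le (p : Fin N → U → ℝ) (hp : ∀ i, IsPmf (p i)) :
    ∑ a : Fin N → U, (∏ i, p i (a i)) * l1 (fun u => emp a u - (∑ i, p i u) / N)
      ≤ √(Fintype.card U) / √N := by
  have hw : ∀ a : Fin N → U, 0 ≤ ∏ i, p i (a i) := fun a => prod_nonneg fun i _ => (hp i).1 _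
  have hw1 : ∑ a : Fin N → U, ∏ i, p i (a i) = 1 := sum_prod_apply_eq_one fun i => (hp i).2
  calc ∑ a : Fin N → U, (∏ i, p i (a i)) * l1 (fun u => emp a u - (∑ i, p i u) / N)
      = ∑ u, ∑ a : Fin N → U, (∏ i, p i (a i)) * |emp a u - (∑ i, p i u) / N| := by
        simp only [l1, mul_sum]
        exact sum_comm
    _ ≤ ∑ u, √(∑ a : Fin N → U, (∏ i, p i (a i)) * (emp a u - (∑ i, p i u) / N) ^ 2) := by
        gcongr with u
        exact sum_mul_abs_le_sqrt_sum_mul_sq hw hw1 _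
    _ ≤ √(Fintype.card U) *
          √(∑ u, ∑ a : Fin N → U, (∏ i, p i (a i)) * (emp a u - (∑ i, p i u) / N) ^ 2) := by
        simpa using Real.sum_sqrt_mul_sqrt_le univ (fun _ => zero_le_one)
          fun u => sum_nonneg fun a _ => mul_nonneg (hw a) (sq_nonneg _)
    _ ≤ √(Fintype.card U) * √(1 / N) := by
        gcongr
        exact sum_sum_prod_mul_emp_sub_sq_le hp
    _ = √(Fintype.card U) / √N := by
        rw [one_div, Real.sqrt_inv, div_eq_mul_inv]

end Empirical

/-- Lemma 4: conditioned on the joint state `x`, when the `N` agents choose actions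
independently according to `π (x i) (emp x)`, the expected L1 distance between the
empirical action distribution and `ν^MF(emp x, π)` is at most `√|U| / √N`.
The expectation is written out explicitly as a sum over all joint actions, weighted
by the product law of the independent action choices. -/
theorem empirical_action_distribution_bound
    {X U : Type*} [Fintype X] [Fintype U] [DecidableEq X] [DecidableEq U]
    (N : ℕ) (hN : 0 < N)
    (π : X → (X → ℝ) → U → ℝ)
    (hπ : ∀ x μ, IsPmf μ → IsPmf (π x μ))
    (x : Fin N → X) :
    ∑ a : Fin N → U, (∏ i, π (x i) (emp x) (a i)) *
        l1 (fun u => emp a u - nuMF (emp x) π u)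
      ≤ Real.sqrt (Fintype.card U) / Real.sqrt N := by
  have hν : nuMF (emp x) π = fun u => (∑ i, π (x i) (emp x) u) / N :=
    funext fun u => sum_mul_emp (fun y => π y (emp x) u) x
  rw [hν]
  exact sum_prod_mul_l1_emp_sub_le _ fun i => hπ _ _ (isPmf_emp hN x)
end

section
/- Let X, U be finite, P(x,u,μ) a transition kernel independent of the action distribution, and let each policy π_t satisfy |π_t(x, μ₁) − π_t(x, μ₂)|₁ ≤ L_Q |μ₁ − μ₂|₁. Let μ_t^N be the empirical state distribution of the N-agent process and μ_t^∞ the mean-field flow μ_{t+1}^∞ = P^MF(μ_t^∞, π_t), both starting from μ₀. If P is Lipschitz in μ with constant L_P, then E|μ_t^N − μ_t^∞|₁ ≤ (2√(|X|)/√N) · (S_P^t − 1)/(S_P − 1), where S_P = (1 + 2L_P) + L_Q(1 + L_P). -/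
open Finset

/-- Mean-field state update when the transition kernel does not depend on the
action distribution. -/
noncomputable def PMFind {X U : Type*} [Fintype X] [Fintype U]
    (P : X → U → (X → ℝ) → X → ℝ)
    (μ : X → ℝ) (π : X → (X → ℝ) → U → ℝ) : X → ℝ :=
  fun y => ∑ x, ∑ u, P x u μ y * π x μ u * μ x

/-- Law of the `N`-agent joint-state process at time `t` (action-independent kernel),
started from the deterministic joint state `x₀`. -/
noncomputable def Wprocind {X U : Type*} [Fintype X] [Fintype U] [DecidableEq X] [DecidableEq U]
    {N : ℕ} (P : X → U → (X → ℝ) → X → ℝ)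
    (π : ℕ → X → (X → ℝ) → U → ℝ) (x₀ : Fin N → X) : ℕ → (Fin N → X) → ℝ
  | 0 => fun s => if s = x₀ then 1 else 0
  | t + 1 => fun s' => ∑ s : Fin N → X, Wprocind P π x₀ t s *
      ∑ a : Fin N → U, (∏ i, π t (s i) (emp s) (a i)) *
        ∏ i, P (s i) (a i) (emp s) (s' i)

/-- Deterministic mean-field flow (action-independent kernel). -/
noncomputable def muFlowind {X U : Type*} [Fintype X] [Fintype U]
    (P : X → U → (X → ℝ) → X → ℝ)
    (π : ℕ → X → (X → ℝ) → U → ℝ) (μ₀ : X → ℝ) : ℕ → X → ℝ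
  | 0 => μ₀
  | t + 1 => PMFind P (muFlowind P π μ₀ t) (π t)


-- sum over product of functions
lemma sum_prod_pi {N : ℕ} {Y : Type*} [Fintype Y] (f : Fin N → Y → ℝ) :
    ∑ s : Fin N → Y, ∏ i, f i (s i) = ∏ i, ∑ y, f i y :=
  (Fintype.prod_sum (κ := fun _ => Y) f).symm

lemma sum_prod_weighted {N : ℕ} {Y : Type*} [Fintype Y] (p : Fin N → Y → ℝ)
    (hp : ∀ i, ∑ y, p i y = 1) (g : Fin N → Y → ℝ) (A : Finset (Fin N)) :
    ∑ s : Fin N → Y, (∏ i, p i (s i)) * (∏ i ∈ A, g i (s i))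
      = ∏ i ∈ A, ∑ y, p i y * g i y := by
  have key : ∀ s : Fin N → Y, (∏ i, p i (s i)) * (∏ i ∈ A, g i (s i))
      = ∏ i, (p i (s i) * if i ∈ A then g i (s i) else 1) := by
    intro s
    rw [Finset.prod_mul_distrib]
    congr 1
    rw [Finset.prod_ite_mem, Finset.univ_inter]
  simp_rw [key]
  rw [sum_prod_pi (fun i y => p i y * if i ∈ A then g i y else 1)]
  have : ∀ i, (∑ y, p i y * if i ∈ A then g i y else 1)
      = if i ∈ A then ∑ y, p i y * g i y else 1 := by
    intro i
    by_cases h : i ∈ A <;> simp [h, hp i]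
  simp_rw [this]
  rw [Finset.prod_ite_mem, Finset.univ_inter]

lemma expect_abs_le_sqrt {α : Type*} [Fintype α] (w f : α → ℝ) (hw : ∀ a, 0 ≤ w a)
    (hw1 : ∑ a, w a = 1) : ∑ a, w a * |f a| ≤ Real.sqrt (∑ a, w a * f a ^ 2) := by
  have h := Real.sum_mul_le_sqrt_mul_sqrt univ (fun a => Real.sqrt (w a))
      (fun a => Real.sqrt (w a) * |f a|)
  have e1 : ∀ a : α, Real.sqrt (w a) * (Real.sqrt (w a) * |f a|) = w a * |f a| := by
    intro a; rw [← mul_assoc, Real.mul_self_sqrt (hw a)]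
  have e2 : ∀ a : α, Real.sqrt (w a) ^ 2 = w a := fun a => Real.sq_sqrt (hw a)
  have e3 : ∀ a : α, (Real.sqrt (w a) * |f a|) ^ 2 = w a * f a ^ 2 := by
    intro a; rw [mul_pow, Real.sq_sqrt (hw a), sq_abs]
  simp_rw [e1, e2, e3] at h
  simpa [hw1] using h

lemma expect_sq {N : ℕ} {Y : Type*} [Fintype Y] (p : Fin N → Y → ℝ)
    (hp1 : ∀ i, ∑ y, p i y = 1) (g : Fin N → Y → ℝ)
    (hg0 : ∀ i, ∑ y, p i y * g i y = 0) :
    ∑ s : Fin N → Y, (∏ i, p i (s i)) * (∑ i, g i (s i)) ^ 2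
      = ∑ i, ∑ y, p i y * g i y ^ 2 := by
  have expand : ∀ s : Fin N → Y, (∏ i, p i (s i)) * (∑ i, g i (s i)) ^ 2
      = ∑ i, ∑ j, (∏ k, p k (s k)) * (g i (s i) * g j (s j)) := by
    intro s
    rw [sq, Finset.sum_mul_sum, Finset.mul_sum]
    congr 1; ext i; rw [Finset.mul_sum]
  simp_rw [expand]
  rw [Finset.sum_comm]
  have swap2 : ∀ i : Fin N, ∑ s : Fin N → Y, ∑ j, (∏ k, p k (s k)) * (g i (s i) * g j (s j))
      = ∑ j, ∑ s : Fin N → Y, (∏ k, p k (s k)) * (g i (s i) * g j (s j)) :=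
    fun i => Finset.sum_comm
  simp_rw [swap2]
  have term : ∀ i j : Fin N, (∑ s : Fin N → Y, (∏ k, p k (s k)) * (g i (s i) * g j (s j)))
      = if j = i then ∑ y, p i y * g i y ^ 2 else 0 := by
    intro i j
    by_cases h : j = i
    · subst h
      have : ∀ s : Fin N → Y, (∏ k, p k (s k)) * (g j (s j) * g j (s j))
          = (∏ k, p k (s k)) * ∏ k ∈ ({j} : Finset (Fin N)), (fun k y => g k y ^ 2) k (s k) := by
        intro s; simp [sq]
      simp_rw [this]
      rw [sum_prod_weighted p hp1 (fun k y => g k y ^ 2) {j}]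
      simp
    · have hij : i ≠ j := fun hh => h hh.symm
      have : ∀ s : Fin N → Y, (∏ k, p k (s k)) * (g i (s i) * g j (s j))
          = (∏ k, p k (s k)) * ∏ k ∈ ({i, j} : Finset (Fin N)), g k (s k) := by
        intro s; rw [Finset.prod_pair hij]
      simp_rw [this]
      rw [sum_prod_weighted p hp1 g {i, j}, Finset.prod_pair hij, hg0 i, zero_mul, if_neg h]
  simp_rw [term]
  simp

lemma sum_sqrt_le {Y : Type*} [Fintype Y] (v : Y → ℝ) (hv : ∀ y, 0 ≤ v y) :
    ∑ y, Real.sqrt (v y) ≤ Real.sqrt (Fintype.card Y) * Real.sqrt (∑ y, v y) := by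
  have h := Real.sum_sqrt_mul_sqrt_le (univ : Finset Y) (f := fun _ => (1:ℝ)) (fun _ => zero_le_one) hv
  simpa using h

lemma emp_concentration {X : Type*} [Fintype X] [DecidableEq X] {N : ℕ} (hN : 0 < N)
    (p : Fin N → X → ℝ) (hp : ∀ i, IsPmf (p i)) :
    ∑ s : Fin N → X, (∏ i, p i (s i)) * l1 (fun y => emp s y - (∑ i, p i y) / N)
      ≤ Real.sqrt (Fintype.card X) / Real.sqrt N := by
  have hNR : (0:ℝ) < N := by exact_mod_cast hN
  set W : (Fin N → X) → ℝ := fun s => ∏ i, p i (s i) with hW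
  have hW0 : ∀ s, 0 ≤ W s := fun s => Finset.prod_nonneg fun i _ => (hp i).1 (s i)
  have hW1 : ∑ s, W s = 1 := by
    rw [hW]; rw [sum_prod_pi]; simp [fun i => (hp i).2]
  -- swap sums
  have swap : ∑ s : Fin N → X, W s * l1 (fun y => emp s y - (∑ i, p i y) / N)
      = ∑ y : X, ∑ s : Fin N → X, W s * |emp s y - (∑ i, p i y) / N| := by
    rw [Finset.sum_comm]
    congr 1; ext s; rw [l1, Finset.mul_sum]
  rw [swap]
  -- per-y bound
  have per_y : ∀ y : X, ∑ s : Fin N → X, W s * |emp s y - (∑ i, p i y) / N|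
      ≤ Real.sqrt ((∑ i, p i y) / (N:ℝ)^2) := by
    intro y
    have hCS := expect_abs_le_sqrt W (fun s => emp s y - (∑ i, p i y) / N) hW0 hW1
    refine hCS.trans (Real.sqrt_le_sqrt ?_)
    -- compute second moment
    set g : Fin N → X → ℝ := fun i x => (if x = y then (1:ℝ) else 0) - p i y with hg
    have hdev : ∀ s : Fin N → X, emp s y - (∑ i, p i y) / N = (∑ i, g i (s i)) / N := by
      intro s
      rw [emp, hg]
      rw [Finset.sum_sub_distrib, sub_div]
    have hg0 : ∀ i, ∑ x, p i x * g i x = 0 := by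
      intro i
      rw [hg]
      simp only [mul_sub, Finset.sum_sub_distrib, mul_ite, mul_one, mul_zero]
      rw [Finset.sum_ite_eq' univ y (p i), ← Finset.sum_mul, (hp i).2]
      simp
    have hsq := expect_sq p (fun i => (hp i).2) g hg0
    have hgsq : ∀ i, ∑ x, p i x * g i x ^ 2 ≤ p i y := by
      intro i
      have key : ∀ x : X, p i x * g i x ^ 2
          = (p i x * if x = y then (1:ℝ) else 0)
            - 2 * p i y * (p i x * if x = y then (1:ℝ) else 0) + p i x * p i y ^ 2 := by
        intro x
        rw [hg]
        by_cases h : x = y <;> simp [h] <;> ring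
      have h1 : ∑ x, (p i x * if x = y then (1:ℝ) else 0) = p i y := by
        simp_rw [mul_ite, mul_one, mul_zero]
        rw [Finset.sum_ite_eq' univ y (p i)]; simp
      have h2 : ∑ x, p i x * p i y ^ 2 = p i y ^ 2 := by
        rw [← Finset.sum_mul, (hp i).2, one_mul]
      simp_rw [key]
      rw [Finset.sum_add_distrib, Finset.sum_sub_distrib, ← Finset.mul_sum, h1, h2]
      nlinarith [(hp i).1 y]
    calc ∑ s : Fin N → X, W s * (emp s y - (∑ i, p i y) / N) ^ 2
        = (∑ s : Fin N → X, W s * (∑ i, g i (s i)) ^ 2) / (N:ℝ)^2 := by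
          simp_rw [hdev, div_pow, ← mul_div_assoc]
          rw [← Finset.sum_div]
      _ = (∑ i, ∑ x, p i x * g i x ^ 2) / (N:ℝ)^2 := by rw [hsq]
      _ ≤ (∑ i, p i y) / (N:ℝ)^2 := by
          apply div_le_div_of_nonneg_right ?_ (by positivity) |>.trans_eq rfl
          exact Finset.sum_le_sum fun i _ => hgsq i
  calc ∑ y : X, ∑ s : Fin N → X, W s * |emp s y - (∑ i, p i y) / N|
      ≤ ∑ y : X, Real.sqrt ((∑ i, p i y) / (N:ℝ)^2) :=
        Finset.sum_le_sum fun y _ => per_y y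
    _ ≤ Real.sqrt (Fintype.card X) * Real.sqrt (∑ y, (∑ i, p i y) / (N:ℝ)^2) := by
        apply sum_sqrt_le
        intro y
        apply div_nonneg (Finset.sum_nonneg fun i _ => (hp i).1 y) (by positivity)
    _ = Real.sqrt (Fintype.card X) / Real.sqrt N := by
        have : ∑ y, (∑ i, p i y) / (N:ℝ)^2 = 1 / N := by
          rw [← Finset.sum_div, Finset.sum_comm]
          simp only [fun i => (hp i).2]
          rw [Finset.sum_const, Finset.card_univ, Fintype.card_fin, nsmul_eq_mul, mul_one]
          field_simp
        rw [this, one_div, Real.sqrt_inv, div_eq_mul_inv]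

section Mf
variable {X U : Type*} [Fintype X] [Fintype U] [DecidableEq X] [DecidableEq U]

lemma emp_isPmf {N : ℕ} (hN : 0 < N) (s : Fin N → X) : IsPmf (emp s) := by
  constructor
  · intro x
    apply div_nonneg _ (Nat.cast_nonneg N)
    exact Finset.sum_nonneg fun i _ => by positivity
  · simp only [emp]
    rw [← Finset.sum_div, Finset.sum_comm]
    have : ∀ i : Fin N, ∑ x, (if s i = x then (1:ℝ) else 0) = 1 := by
      intro i; rw [Finset.sum_ite_eq univ (s i) (fun _ => (1:ℝ))]; simp
    simp_rw [this]
    rw [Finset.sum_const, Finset.card_univ, Fintype.card_fin, nsmul_eq_mul, mul_one]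
    field_simp

lemma PMFind_isPmf (P : X → U → (X → ℝ) → X → ℝ) (μ : X → ℝ) (π' : X → (X → ℝ) → U → ℝ)
    (hμ : IsPmf μ) (hP : ∀ x u, IsPmf (P x u μ)) (hπ : ∀ x, IsPmf (π' x μ)) :
    IsPmf (PMFind P μ π') := by
  constructor
  · intro y
    apply Finset.sum_nonneg; intro x _
    apply Finset.sum_nonneg; intro u _
    exact mul_nonneg (mul_nonneg ((hP x u).1 y) ((hπ x).1 u)) (hμ.1 x)
  · simp only [PMFind]
    rw [Finset.sum_comm]
    have hswap : ∀ x, ∑ y, ∑ u, P x u μ y * π' x μ u * μ x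
        = ∑ u, ∑ y, P x u μ y * π' x μ u * μ x := fun x => Finset.sum_comm
    simp_rw [hswap]
    have : ∀ x u, ∑ y, P x u μ y * π' x μ u * μ x = π' x μ u * μ x := by
      intro x u
      rw [← Finset.sum_mul, ← Finset.sum_mul, (hP x u).2, one_mul]
    simp_rw [this]
    have : ∀ x, ∑ u, π' x μ u * μ x = μ x := by
      intro x; rw [← Finset.sum_mul, (hπ x).2, one_mul]
    simp_rw [this, hμ.2]

lemma PMFind_emp {N : ℕ} (P : X → U → (X → ℝ) → X → ℝ) (π' : X → (X → ℝ) → U → ℝ)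
    (s : Fin N → X) (y : X) :
    PMFind P (emp s) π' y
      = (∑ i, ∑ u, π' (s i) (emp s) u * P (s i) u (emp s) y) / N := by
  rw [PMFind]
  have : ∀ x, ∑ u, P x u (emp s) y * π' x (emp s) u * emp s x
      = (∑ i, if s i = x then (1:ℝ) else 0) / N * (∑ u, π' x (emp s) u * P x u (emp s) y) := by
    intro x
    rw [emp, Finset.mul_sum]
    apply Finset.sum_congr rfl; intro u _; ring
  simp_rw [this]
  simp_rw [div_mul_eq_mul_div]
  rw [← Finset.sum_div]
  congr 1
  simp_rw [Finset.sum_mul]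
  rw [Finset.sum_comm]
  apply Finset.sum_congr rfl; intro i _
  simp_rw [ite_mul, one_mul, zero_mul]
  rw [Finset.sum_ite_eq univ (s i) (fun x => ∑ u, π' x (emp s) u * P x u (emp s) y)]
  simp

lemma PMFind_lip (L_P L_Q : ℝ) (P : X → U → (X → ℝ) → X → ℝ)
    (π' : X → (X → ℝ) → U → ℝ) (μ₁ μ₂ : X → ℝ) (hμ₁ : IsPmf μ₁) (hμ₂ : IsPmf μ₂)
    (hP2 : ∀ x u, IsPmf (P x u μ₂)) (hπ1 : ∀ x, IsPmf (π' x μ₁)) (hπ2 : ∀ x, IsPmf (π' x μ₂))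
    (hPLip : ∀ x u, l1 (fun y => P x u μ₁ y - P x u μ₂ y) ≤ L_P * l1 (fun x' => μ₁ x' - μ₂ x'))
    (hπLip : ∀ x, l1 (fun u => π' x μ₁ u - π' x μ₂ u) ≤ L_Q * l1 (fun x' => μ₁ x' - μ₂ x')) :
    l1 (fun y => PMFind P μ₁ π' y - PMFind P μ₂ π' y)
      ≤ (1 + L_P + L_Q) * l1 (fun x => μ₁ x - μ₂ x) := by
  set d := l1 (fun x => μ₁ x - μ₂ x) with hd
  have hd0 : 0 ≤ d := Finset.sum_nonneg fun x _ => abs_nonneg _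
  -- pointwise three-term bound
  have ptwise : ∀ x u y, |P x u μ₁ y * π' x μ₁ u * μ₁ x - P x u μ₂ y * π' x μ₂ u * μ₂ x|
      ≤ |P x u μ₁ y - P x u μ₂ y| * (π' x μ₁ u * μ₁ x)
        + P x u μ₂ y * (|π' x μ₁ u - π' x μ₂ u| * μ₁ x)
        + P x u μ₂ y * (π' x μ₂ u * |μ₁ x - μ₂ x|) := by
    intro x u y
    have decomp : P x u μ₁ y * π' x μ₁ u * μ₁ x - P x u μ₂ y * π' x μ₂ u * μ₂ x
        = (P x u μ₁ y - P x u μ₂ y) * (π' x μ₁ u * μ₁ x)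
          + P x u μ₂ y * ((π' x μ₁ u - π' x μ₂ u) * μ₁ x)
          + P x u μ₂ y * (π' x μ₂ u * (μ₁ x - μ₂ x)) := by ring
    rw [decomp]
    refine (abs_add_le _ _).trans ?_
    gcongr
    · refine (abs_add_le _ _).trans ?_
      gcongr
      · rw [abs_mul]
        gcongr
        rw [abs_of_nonneg (mul_nonneg ((hπ1 x).1 u) (hμ₁.1 x))]
      · rw [abs_mul, abs_mul, abs_of_nonneg ((hP2 x u).1 y), abs_of_nonneg (hμ₁.1 x)]
    · rw [abs_mul, abs_mul, abs_of_nonneg ((hP2 x u).1 y), abs_of_nonneg ((hπ2 x).1 u)]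
  -- l1 of difference bounded by triple sum
  have step1 : l1 (fun y => PMFind P μ₁ π' y - PMFind P μ₂ π' y)
      ≤ ∑ y, ∑ x, ∑ u, |P x u μ₁ y * π' x μ₁ u * μ₁ x - P x u μ₂ y * π' x μ₂ u * μ₂ x| := by
    apply Finset.sum_le_sum; intro y _
    simp only [PMFind, ← Finset.sum_sub_distrib]
    exact (Finset.abs_sum_le_sum_abs _ _).trans (Finset.sum_le_sum fun x _ =>
      Finset.abs_sum_le_sum_abs _ _)
  refine step1.trans ?_
  have step2 : ∑ y, ∑ x, ∑ u, |P x u μ₁ y * π' x μ₁ u * μ₁ x - P x u μ₂ y * π' x μ₂ u * μ₂ x|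
      ≤ ∑ y, ∑ x, ∑ u, (|P x u μ₁ y - P x u μ₂ y| * (π' x μ₁ u * μ₁ x)
        + P x u μ₂ y * (|π' x μ₁ u - π' x μ₂ u| * μ₁ x)
        + P x u μ₂ y * (π' x μ₂ u * |μ₁ x - μ₂ x|)) := by
    apply Finset.sum_le_sum; intro y _
    apply Finset.sum_le_sum; intro x _
    apply Finset.sum_le_sum; intro u _
    exact ptwise x u y
  refine step2.trans ?_
  simp only [Finset.sum_add_distrib]
  -- term A
  have hA : ∑ y, ∑ x, ∑ u, |P x u μ₁ y - P x u μ₂ y| * (π' x μ₁ u * μ₁ x) ≤ L_P * d := by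
    have swap : ∑ y, ∑ x, ∑ u, |P x u μ₁ y - P x u μ₂ y| * (π' x μ₁ u * μ₁ x)
        = ∑ x, ∑ u, (∑ y, |P x u μ₁ y - P x u μ₂ y|) * (π' x μ₁ u * μ₁ x) := by
      rw [Finset.sum_comm]
      apply Finset.sum_congr rfl; intro x _
      rw [Finset.sum_comm]
      apply Finset.sum_congr rfl; intro u _
      rw [Finset.sum_mul]
    rw [swap]
    have bd : ∀ x u, (∑ y, |P x u μ₁ y - P x u μ₂ y|) * (π' x μ₁ u * μ₁ x)
        ≤ (L_P * d) * (π' x μ₁ u * μ₁ x) := by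
      intro x u
      exact mul_le_mul_of_nonneg_right (hPLip x u) (mul_nonneg ((hπ1 x).1 u) (hμ₁.1 x))
    refine (Finset.sum_le_sum fun x _ => Finset.sum_le_sum fun u _ => bd x u).trans ?_
    simp_rw [← Finset.mul_sum]
    have : ∀ x, ∑ u, π' x μ₁ u * μ₁ x = μ₁ x := by
      intro x; rw [← Finset.sum_mul, (hπ1 x).2, one_mul]
    simp_rw [this, hμ₁.2, mul_one]
    exact le_rfl
  -- term B
  have hB : ∑ y, ∑ x, ∑ u, P x u μ₂ y * (|π' x μ₁ u - π' x μ₂ u| * μ₁ x) ≤ L_Q * d := by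
    have swap : ∑ y, ∑ x, ∑ u, P x u μ₂ y * (|π' x μ₁ u - π' x μ₂ u| * μ₁ x)
        = ∑ x, ∑ u, (∑ y, P x u μ₂ y) * (|π' x μ₁ u - π' x μ₂ u| * μ₁ x) := by
      rw [Finset.sum_comm]
      apply Finset.sum_congr rfl; intro x _
      rw [Finset.sum_comm]
      apply Finset.sum_congr rfl; intro u _
      rw [Finset.sum_mul]
    rw [swap]
    simp_rw [fun x u => (hP2 x u).2, one_mul]
    have : ∀ x, ∑ u, |π' x μ₁ u - π' x μ₂ u| * μ₁ x
        = (∑ u, |π' x μ₁ u - π' x μ₂ u|) * μ₁ x := fun x => (Finset.sum_mul _ _ _).symm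
    simp_rw [this]
    have bd : ∀ x, (∑ u, |π' x μ₁ u - π' x μ₂ u|) * μ₁ x ≤ (L_Q * d) * μ₁ x :=
      fun x => mul_le_mul_of_nonneg_right (hπLip x) (hμ₁.1 x)
    refine (Finset.sum_le_sum fun x _ => bd x).trans ?_
    rw [← Finset.mul_sum, hμ₁.2, mul_one]
  -- term C
  have hC : ∑ y, ∑ x, ∑ u, P x u μ₂ y * (π' x μ₂ u * |μ₁ x - μ₂ x|) ≤ d := by
    have swap : ∑ y, ∑ x, ∑ u, P x u μ₂ y * (π' x μ₂ u * |μ₁ x - μ₂ x|)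
        = ∑ x, ∑ u, (∑ y, P x u μ₂ y) * (π' x μ₂ u * |μ₁ x - μ₂ x|) := by
      rw [Finset.sum_comm]
      apply Finset.sum_congr rfl; intro x _
      rw [Finset.sum_comm]
      apply Finset.sum_congr rfl; intro u _
      rw [Finset.sum_mul]
    rw [swap]
    simp_rw [fun x u => (hP2 x u).2, one_mul]
    have : ∀ x, ∑ u, π' x μ₂ u * |μ₁ x - μ₂ x| = |μ₁ x - μ₂ x| := by
      intro x; rw [← Finset.sum_mul, (hπ2 x).2, one_mul]
    simp_rw [this]
    exact le_of_eq rfl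
  linarith

end Mf

section Main
variable {X U : Type*} [Fintype X] [Fintype U] [DecidableEq X] [DecidableEq U]

lemma kernel_factor {N : ℕ} (P : X → U → (X → ℝ) → X → ℝ)
    (πt : X → (X → ℝ) → U → ℝ) (s s' : Fin N → X) :
    (∑ a : Fin N → U, (∏ i, πt (s i) (emp s) (a i)) * ∏ i, P (s i) (a i) (emp s) (s' i))
    = ∏ i, ∑ u, πt (s i) (emp s) u * P (s i) u (emp s) (s' i) := by
  have h : ∀ a : Fin N → U, (∏ i, πt (s i) (emp s) (a i)) * ∏ i, P (s i) (a i) (emp s) (s' i)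
      = ∏ i, (πt (s i) (emp s) (a i) * P (s i) (a i) (emp s) (s' i)) :=
    fun a => (Finset.prod_mul_distrib).symm
  simp_rw [h]
  exact sum_prod_pi (fun i u => πt (s i) (emp s) u * P (s i) u (emp s) (s' i))

lemma step_p_isPmf {N : ℕ} (hN : 0 < N) (P : X → U → (X → ℝ) → X → ℝ)
    (hP : ∀ x u μ, IsPmf μ → IsPmf (P x u μ))
    (πt : X → (X → ℝ) → U → ℝ) (hπ : ∀ x μ, IsPmf μ → IsPmf (πt x μ))
    (s : Fin N → X) (i : Fin N) :
    IsPmf (fun y => ∑ u, πt (s i) (emp s) u * P (s i) u (emp s) y) := by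
  have he := emp_isPmf hN s
  constructor
  · intro y
    exact Finset.sum_nonneg fun u _ =>
      mul_nonneg ((hπ _ _ he).1 u) ((hP _ u _ he).1 y)
  · rw [Finset.sum_comm]
    have : ∀ u, ∑ y, πt (s i) (emp s) u * P (s i) u (emp s) y = πt (s i) (emp s) u := by
      intro u; rw [← Finset.mul_sum, (hP _ u _ he).2, mul_one]
    simp_rw [this]
    exact (hπ _ _ he).2

lemma Wprocind_isPmf {N : ℕ} (hN : 0 < N) (P : X → U → (X → ℝ) → X → ℝ)
    (hP : ∀ x u μ, IsPmf μ → IsPmf (P x u μ))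
    (π : ℕ → X → (X → ℝ) → U → ℝ) (hπ : ∀ t x μ, IsPmf μ → IsPmf (π t x μ))
    (x₀ : Fin N → X) (t : ℕ) :
    (∀ s, 0 ≤ Wprocind P π x₀ t s) ∧ ∑ s, Wprocind P π x₀ t s = 1 := by
  induction t with
  | zero =>
    constructor
    · intro s; simp only [Wprocind]; positivity
    · simp [Wprocind]
  | succ t ih =>
    have hker : ∀ s s' : Fin N → X,
        (∑ a : Fin N → U, (∏ i, π t (s i) (emp s) (a i)) * ∏ i, P (s i) (a i) (emp s) (s' i))
        = ∏ i, ∑ u, π t (s i) (emp s) u * P (s i) u (emp s) (s' i) :=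
      fun s s' => kernel_factor P (π t) s s'
    constructor
    · intro s'
      simp only [Wprocind]
      apply Finset.sum_nonneg; intro s _
      apply mul_nonneg (ih.1 s)
      rw [hker s s']
      exact Finset.prod_nonneg fun i _ => (step_p_isPmf hN P hP (π t) (hπ t) s i).1 (s' i)
    · simp only [Wprocind]
      rw [Finset.sum_comm]
      have inner : ∀ s : Fin N → X, ∑ s' : Fin N → X, Wprocind P π x₀ t s *
          (∑ a : Fin N → U, (∏ i, π t (s i) (emp s) (a i)) * ∏ i, P (s i) (a i) (emp s) (s' i))
          = Wprocind P π x₀ t s := by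
        intro s
        rw [← Finset.mul_sum]
        simp_rw [hker s]
        rw [sum_prod_pi (fun i y => ∑ u, π t (s i) (emp s) u * P (s i) u (emp s) y)]
        have : ∀ i : Fin N, ∑ y, ∑ u, π t (s i) (emp s) u * P (s i) u (emp s) y = 1 :=
          fun i => (step_p_isPmf hN P hP (π t) (hπ t) s i).2
        simp_rw [this]
        simp
      simp_rw [inner]
      exact ih.2

lemma muFlowind_isPmf (P : X → U → (X → ℝ) → X → ℝ)
    (hP : ∀ x u μ, IsPmf μ → IsPmf (P x u μ))
    (π : ℕ → X → (X → ℝ) → U → ℝ) (hπ : ∀ t x μ, IsPmf μ → IsPmf (π t x μ))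
    (μ₀ : X → ℝ) (hμ₀ : IsPmf μ₀) (t : ℕ) : IsPmf (muFlowind P π μ₀ t) := by
  induction t with
  | zero => exact hμ₀
  | succ t ih =>
    exact PMFind_isPmf P _ (π t) ih (fun x u => hP x u _ ih) (fun x => hπ t x _ ih)

end Main

/-- Lemma 10: propagation-of-chaos bound in the action-distribution-independent case:
`E|μ_t^N − μ_t^∞|₁ ≤ (2√|X|/√N)·(S_P^t − 1)/(S_P − 1)`,
where `S_P = (1 + 2L_P) + L_Q(1 + L_P)`. -/
theorem empirical_vs_meanfield_flow_bound_action_independent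
    {X U : Type*} [Fintype X] [Fintype U] [DecidableEq X] [DecidableEq U]
    (N : ℕ) (hN : 0 < N)
    (L_P L_Q : ℝ) (hLP : 0 < L_P) (hLQ : 0 < L_Q)
    (P : X → U → (X → ℝ) → X → ℝ)
    (hP : ∀ x u μ, IsPmf μ → IsPmf (P x u μ))
    (hPLip : ∀ x u μ₁ μ₂, IsPmf μ₁ → IsPmf μ₂ →
      l1 (fun y => P x u μ₁ y - P x u μ₂ y) ≤ L_P * l1 (fun x' => μ₁ x' - μ₂ x'))
    (π : ℕ → X → (X → ℝ) → U → ℝ)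
    (hπ : ∀ t x μ, IsPmf μ → IsPmf (π t x μ))
    (hπLip : ∀ t x μ₁ μ₂, IsPmf μ₁ → IsPmf μ₂ →
      l1 (fun u => π t x μ₁ u - π t x μ₂ u) ≤ L_Q * l1 (fun x' => μ₁ x' - μ₂ x'))
    (x₀ : Fin N → X) (μ₀ : X → ℝ) (hμ₀ : μ₀ = emp x₀) (t : ℕ) :
    ∑ s : Fin N → X, Wprocind P π x₀ t s * l1 (fun x => emp s x - muFlowind P π μ₀ t x)
      ≤ (2 * Real.sqrt (Fintype.card X) / Real.sqrt N) *
          ((((1 + 2 * L_P) + L_Q * (1 + L_P)) ^ t - 1) /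
            (((1 + 2 * L_P) + L_Q * (1 + L_P)) - 1)) := by
  set S : ℝ := (1 + 2 * L_P) + L_Q * (1 + L_P) with hS
  set b : ℝ := Real.sqrt (Fintype.card X) / Real.sqrt N with hb
  have hb0 : 0 ≤ b := by positivity
  have hS1 : 1 < S := by nlinarith
  have hSd : 0 < S - 1 := by linarith
  have hμ₀pmf : IsPmf μ₀ := hμ₀ ▸ emp_isPmf hN x₀
  have hflow : ∀ k, IsPmf (muFlowind P π μ₀ k) := muFlowind_isPmf P hP π hπ μ₀ hμ₀pmf
  induction t with
  | zero =>
    simp only [Wprocind, muFlowind, hμ₀, pow_zero, sub_self, zero_div, mul_zero]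
    have : ∀ s : Fin N → X, (if s = x₀ then (1:ℝ) else 0) *
        l1 (fun x => emp s x - emp x₀ x)
        = if s = x₀ then l1 (fun x => emp s x - emp x₀ x) else 0 := by
      intro s; split <;> simp
    simp_rw [this]
    rw [Finset.sum_ite_eq' univ x₀ (fun s => l1 (fun x => emp s x - emp x₀ x))]
    simp [l1]
  | succ t ih =>
    have hWt := Wprocind_isPmf hN P hP π hπ x₀ t
    -- rewrite LHS
    have lhs_eq : ∑ s' : Fin N → X, Wprocind P π x₀ (t+1) s' *
        l1 (fun x => emp s' x - muFlowind P π μ₀ (t+1) x)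
        = ∑ s : Fin N → X, Wprocind P π x₀ t s *
            ∑ s' : Fin N → X,
              (∑ a : Fin N → U, (∏ i, π t (s i) (emp s) (a i)) *
                  ∏ i, P (s i) (a i) (emp s) (s' i)) *
              l1 (fun x => emp s' x - muFlowind P π μ₀ (t+1) x) := by
      simp only [Wprocind]
      simp_rw [Finset.sum_mul]
      rw [Finset.sum_comm]
      apply Finset.sum_congr rfl; intro s _
      rw [Finset.mul_sum]
      apply Finset.sum_congr rfl; intro s' _
      rw [mul_assoc]
      congr 1
      rw [Finset.sum_mul]
    rw [lhs_eq]
    -- per-s bound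
    have key : ∀ s : Fin N → X,
        (∑ s' : Fin N → X,
          (∑ a : Fin N → U, (∏ i, π t (s i) (emp s) (a i)) *
              ∏ i, P (s i) (a i) (emp s) (s' i)) *
          l1 (fun x => emp s' x - muFlowind P π μ₀ (t+1) x))
        ≤ b + S * l1 (fun x => emp s x - muFlowind P π μ₀ t x) := by
      intro s
      have hemp := emp_isPmf hN s
      set p : Fin N → X → ℝ := fun i y => ∑ u, π t (s i) (emp s) u * P (s i) u (emp s) y
        with hpdef
      have hp : ∀ i, IsPmf (p i) := fun i => step_p_isPmf hN P hP (π t) (hπ t) s i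
      have hker : ∀ s' : Fin N → X,
          (∑ a : Fin N → U, (∏ i, π t (s i) (emp s) (a i)) *
              ∏ i, P (s i) (a i) (emp s) (s' i)) = ∏ i, p i (s' i) :=
        fun s' => kernel_factor P (π t) s s'
      simp_rw [hker]
      have hWsum : ∑ s' : Fin N → X, ∏ i, p i (s' i) = 1 := by
        rw [sum_prod_pi p]; simp [fun i => (hp i).2]
      set q : X → ℝ := fun y => (∑ i, p i y) / N with hqdef
      have hq : ∀ y, q y = PMFind P (emp s) (π t) y :=
        fun y => (PMFind_emp P (π t) s y).symm
      -- triangle inequality pointwise on l1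
      have tri : ∀ s' : Fin N → X, l1 (fun x => emp s' x - muFlowind P π μ₀ (t+1) x)
          ≤ l1 (fun y => emp s' y - q y) + l1 (fun y => q y - muFlowind P π μ₀ (t+1) y) := by
        intro s'
        rw [l1, l1, l1, ← Finset.sum_add_distrib]
        apply Finset.sum_le_sum; intro y _
        calc |emp s' y - muFlowind P π μ₀ (t+1) y|
            = |(emp s' y - q y) + (q y - muFlowind P π μ₀ (t+1) y)| := by ring_nf
          _ ≤ _ := abs_add_le _ _
      have step : (∑ s' : Fin N → X, (∏ i, p i (s' i)) *
            l1 (fun x => emp s' x - muFlowind P π μ₀ (t+1) x))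
          ≤ (∑ s' : Fin N → X, (∏ i, p i (s' i)) * l1 (fun y => emp s' y - q y))
            + l1 (fun y => q y - muFlowind P π μ₀ (t+1) y) := by
        have hmono : ∀ s' : Fin N → X, (∏ i, p i (s' i)) *
              l1 (fun x => emp s' x - muFlowind P π μ₀ (t+1) x)
            ≤ (∏ i, p i (s' i)) * (l1 (fun y => emp s' y - q y)
                + l1 (fun y => q y - muFlowind P π μ₀ (t+1) y)) := by
          intro s'
          exact mul_le_mul_of_nonneg_left (tri s')
            (Finset.prod_nonneg fun i _ => (hp i).1 (s' i))
        refine (Finset.sum_le_sum fun s' _ => hmono s').trans ?_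
        simp_rw [mul_add]
        rw [Finset.sum_add_distrib, ← Finset.sum_mul, hWsum, one_mul]
      refine step.trans ?_
      have conc : (∑ s' : Fin N → X, (∏ i, p i (s' i)) * l1 (fun y => emp s' y - q y)) ≤ b :=
        emp_concentration hN p hp
      have lip : l1 (fun y => q y - muFlowind P π μ₀ (t+1) y)
          ≤ S * l1 (fun x => emp s x - muFlowind P π μ₀ t x) := by
        have e : (fun y => q y - muFlowind P π μ₀ (t+1) y)
            = fun y => PMFind P (emp s) (π t) y - PMFind P (muFlowind P π μ₀ t) (π t) y := by
          funext y
          rw [hq y]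
          rfl
        rw [e]
        have h1 := PMFind_lip L_P L_Q P (π t) (emp s) (muFlowind P π μ₀ t) hemp (hflow t)
          (fun x u => hP x u _ (hflow t)) (fun x => hπ t x _ hemp) (fun x => hπ t x _ (hflow t))
          (fun x u => hPLip x u _ _ hemp (hflow t)) (fun x => hπLip t x _ _ hemp (hflow t))
        refine h1.trans ?_
        have hl1 : 0 ≤ l1 (fun x => emp s x - muFlowind P π μ₀ t x) :=
          Finset.sum_nonneg fun x _ => abs_nonneg _
        apply mul_le_mul_of_nonneg_right _ hl1
        nlinarith
      linarith
    -- combine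
    have comb : ∑ s : Fin N → X, Wprocind P π x₀ t s *
        (∑ s' : Fin N → X,
          (∑ a : Fin N → U, (∏ i, π t (s i) (emp s) (a i)) *
              ∏ i, P (s i) (a i) (emp s) (s' i)) *
          l1 (fun x => emp s' x - muFlowind P π μ₀ (t+1) x))
        ≤ ∑ s : Fin N → X, Wprocind P π x₀ t s *
            (b + S * l1 (fun x => emp s x - muFlowind P π μ₀ t x)) :=
      Finset.sum_le_sum fun s _ => mul_le_mul_of_nonneg_left (key s) (hWt.1 s)
    refine comb.trans ?_
    have expand : ∑ s : Fin N → X, Wprocind P π x₀ t s *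
        (b + S * l1 (fun x => emp s x - muFlowind P π μ₀ t x))
        = b + S * ∑ s : Fin N → X, Wprocind P π x₀ t s *
            l1 (fun x => emp s x - muFlowind P π μ₀ t x) := by
      simp_rw [mul_add, Finset.sum_add_distrib, ← Finset.sum_mul, hWt.2, one_mul,
        Finset.mul_sum]
      congr 1
      apply Finset.sum_congr rfl; intro s _; ring
    rw [expand]
    have hmul : S * ∑ s : Fin N → X, Wprocind P π x₀ t s *
        l1 (fun x => emp s x - muFlowind P π μ₀ t x)
        ≤ S * ((2 * Real.sqrt (Fintype.card X) / Real.sqrt N) * ((S ^ t - 1) / (S - 1))) :=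
      mul_le_mul_of_nonneg_left ih (by linarith)
    have alg : (2 * Real.sqrt (Fintype.card X) / Real.sqrt N) * ((S ^ (t+1) - 1) / (S - 1))
        - (b + S * ((2 * Real.sqrt (Fintype.card X) / Real.sqrt N) * ((S ^ t - 1) / (S - 1))))
        = 2 * b - b := by
      rw [hb]
      have hSne : S - 1 ≠ 0 := ne_of_gt hSd
      field_simp
      ring
    linarith
end
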